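/- If the sampling conditions of the over-estimated support proposition hold and μ₁,…,μ_Q is a basis of the space of trigonometric polynomials with support in Γ vanishing at all sample points, then the sum-of-squares function γ(x) = ∑_{i=1}^Q |μ_i(x)|² vanishes at x if and only if ψ(x) = 0. That is, the zero level set of γ equals the zero level set of the minimal polynomial ψ. -/

import Mathlib

open scoped Real

noncomputable def rectZ (a b : ℕ) : Finset (ℤ × ℤ) := Finset.Ico (0 : ℤ) (a : ℤ) ×ˢ Finset.Ico (0 : ℤ) (b : ℤ)

noncomputable def trigExp (k : ℤ × ℤ) (x : ℝ × ℝ) : ℂ :=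
  Complex.exp (2 * Real.pi * Complex.I * ((k.1 : ℂ) * (x.1 : ℂ) + (k.2 : ℂ) * (x.2 : ℂ)))

noncomputable def trigPolyZ (Λ : Finset (ℤ × ℤ)) (c : ℤ × ℤ → ℂ) (x : ℝ × ℝ) : ℂ :=
  ∑ k ∈ Λ, c k * trigExp k x

noncomputable def assocPolyZ (Λ : Finset (ℤ × ℤ)) (c : ℤ × ℤ → ℂ) : MvPolynomial (Fin 2) ℂ :=
  ∑ k ∈ Λ, MvPolynomial.C (c k) * MvPolynomial.X 0 ^ k.1.toNat * MvPolynomial.X 1 ^ k.2.toNat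

/-!
Substituting `zᵢ = exp (2πi yᵢ)` turns trigonometric polynomials with support in a rectangle of
the first quadrant into bivariate polynomials, and points of `[0,1)²` into distinct points of the
torus. An irreducible factor `p` of `ψ` of bidegree `≤ (k₁, k₂)` vanishes, together with every
`μᵢ` (bidegree `≤ (l₁, l₂)`), at more than `k₁ l₂ + k₂ l₁` distinct points, so a bidegree Bézout
bound forces `p ∣ μᵢ`: every zero of `ψ` is a zero of all `μᵢ`. Conversely `ψ` itself has support
in `Γ` and vanishes at the samples, so it is a combination of the `μᵢ` and vanishes where they do.
-/

noncomputable section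

open Module Function

namespace MvPolynomial

variable (K : Type*) [Field K]

def bidegreeLE (α β : ℕ) : Submodule K (MvPolynomial (Fin 2) K) :=
  restrictSupport K {m | m 0 ≤ α ∧ m 1 ≤ β}

variable {K}

theorem mem_bidegreeLE {α β : ℕ} {q : MvPolynomial (Fin 2) K} :
    q ∈ bidegreeLE K α β ↔ degreeOf 0 q ≤ α ∧ degreeOf 1 q ≤ β := by
  simp only [bidegreeLE, mem_restrictSupport_iff, degreeOf_le_iff, Set.subset_def,
    Finset.mem_coe, Set.mem_ofPred_eq, imp_and, forall_and]

def bidegreeLEIndexEquiv (α β : ℕ) :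
    {m : Fin 2 →₀ ℕ | m 0 ≤ α ∧ m 1 ≤ β} ≃ Fin (α + 1) × Fin (β + 1) where
  toFun m := (⟨m.1 0, Nat.lt_succ_of_le m.2.1⟩, ⟨m.1 1, Nat.lt_succ_of_le m.2.2⟩)
  invFun p := ⟨Finsupp.equivFunOnFinite.symm ![p.1, p.2],
    Nat.le_of_lt_succ p.1.2, Nat.le_of_lt_succ p.2.2⟩
  left_inv := by
    rintro ⟨m, hm⟩
    ext i
    fin_cases i <;> rfl
  right_inv _ := rfl

def bidegreeLEBasis (α β : ℕ) : Basis (Fin (α + 1) × Fin (β + 1)) K (bidegreeLE K α β) :=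
  (basisRestrictSupport K _).reindex (bidegreeLEIndexEquiv α β)

instance (α β : ℕ) : Module.Finite K (bidegreeLE K α β) := .of_basis (bidegreeLEBasis α β)

theorem finrank_bidegreeLE (α β : ℕ) : finrank K (bidegreeLE K α β) = (α + 1) * (β + 1) := by
  simp [finrank_eq_card_basis (bidegreeLEBasis α β)]

theorem mem_bidegreeLE_degreeOf (q : MvPolynomial (Fin 2) K) :
    q ∈ bidegreeLE K (degreeOf 0 q) (degreeOf 1 q) :=
  mem_bidegreeLE.2 ⟨le_rfl, le_rfl⟩

theorem bidegreeLE_mono {α α' β β' : ℕ} (hα : α ≤ α') (hβ : β ≤ β') :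
    bidegreeLE K α β ≤ bidegreeLE K α' β' :=
  restrictSupport_mono K fun _ hm => ⟨hm.1.trans hα, hm.2.trans hβ⟩

theorem mul_mem_bidegreeLE {q r : MvPolynomial (Fin 2) K} {a b c d : ℕ}
    (hq : q ∈ bidegreeLE K a b) (hr : r ∈ bidegreeLE K c d) :
    q * r ∈ bidegreeLE K (a + c) (b + d) := by
  rw [mem_bidegreeLE] at *
  exact ⟨(degreeOf_mul_le _ _ _).trans (by omega), (degreeOf_mul_le _ _ _).trans (by omega)⟩

theorem mem_bidegreeLE_of_mul_mem {p h : MvPolynomial (Fin 2) K} {α β : ℕ} (hp : p ≠ 0)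
    (hph : p * h ∈ bidegreeLE K (degreeOf 0 p + α) (degreeOf 1 p + β)) : h ∈ bidegreeLE K α β := by
  rcases eq_or_ne h 0 with rfl | hh
  · exact zero_mem _
  rw [mem_bidegreeLE, degreeOf_mul_eq hp hh, degreeOf_mul_eq hp hh] at hph
  exact mem_bidegreeLE.2 ⟨by omega, by omega⟩

theorem prod_mem_bidegreeLE {ι : Type*} {s : Finset ι} {f : ι → MvPolynomial (Fin 2) K}
    {α β : ℕ} (hf : ∀ t ∈ s, f t ∈ bidegreeLE K α β) :
    ∏ t ∈ s, f t ∈ bidegreeLE K (s.card * α) (s.card * β) := by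
  have hdeg (i : Fin 2) (γ : ℕ) (hγ : ∀ t ∈ s, degreeOf i (f t) ≤ γ) :
      degreeOf i (∏ t ∈ s, f t) ≤ s.card * γ :=
    (degreeOf_prod_le _ _ _).trans ((Finset.sum_le_card_nsmul _ _ _ hγ).trans_eq (smul_eq_mul ..))
  exact mem_bidegreeLE.2 ⟨hdeg 0 α fun t ht => (mem_bidegreeLE.1 (hf t ht)).1,
    hdeg 1 β fun t ht => (mem_bidegreeLE.1 (hf t ht)).2⟩

theorem map_mulLeft_bidegreeLE_le {q : MvPolynomial (Fin 2) K} {a b : ℕ} (hq : q ∈ bidegreeLE K a b)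
    (c d : ℕ) : (bidegreeLE K c d).map (LinearMap.mulLeft K q) ≤ bidegreeLE K (a + c) (b + d) := by
  rintro _ ⟨r, hr, rfl⟩
  exact mul_mem_bidegreeLE hq hr

theorem finrank_map_mulLeft {p : MvPolynomial (Fin 2) K} (hp : p ≠ 0)
    (S : Submodule K (MvPolynomial (Fin 2) K)) :
    finrank K (S.map (LinearMap.mulLeft K p)) = finrank K S :=
  (Submodule.equivMapOfInjective _ (mul_right_injective₀ hp) S).finrank_eq.symm

theorem map_mulLeft_inf_map_mulLeft_le {p P : MvPolynomial (Fin 2) K} (hp : Prime p) (hpP : ¬p ∣ P)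
    (S : Submodule K (MvPolynomial (Fin 2) K)) (α β : ℕ) :
    S.map (LinearMap.mulLeft K p) ⊓
        (bidegreeLE K (degreeOf 0 p + α) (degreeOf 1 p + β)).map (LinearMap.mulLeft K P) ≤
      (bidegreeLE K α β).map (LinearMap.mulLeft K (p * P)) := by
  rintro _ ⟨⟨A, -, rfl⟩, B, hB, hBA⟩
  simp only [LinearMap.mulLeft_apply] at hBA ⊢
  obtain ⟨h, rfl⟩ : p ∣ B := (hp.dvd_or_dvd ⟨A, hBA⟩).resolve_left hpP
  exact ⟨h, mem_bidegreeLE_of_mul_mem hp.ne_zero hB, by rw [LinearMap.mulLeft_apply, ← hBA]; ring⟩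

def evalPoints {n : ℕ} (pts : Fin n → Fin 2 → K) : MvPolynomial (Fin 2) K →ₗ[K] Fin n → K :=
  LinearMap.pi fun s => (aeval (pts s)).toLinearMap

@[simp]
theorem evalPoints_apply {n : ℕ} (pts : Fin n → Fin 2 → K) (q : MvPolynomial (Fin 2) K)
    (s : Fin n) :
    evalPoints pts q s = eval (pts s) q := by
  simp [evalPoints]

theorem map_mulLeft_le_ker_evalPoints {n : ℕ} {pts : Fin n → Fin 2 → K} {q : MvPolynomial (Fin 2) K}
    (hq : ∀ s, eval (pts s) q = 0) (S : Submodule K (MvPolynomial (Fin 2) K)) :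
    S.map (LinearMap.mulLeft K q) ≤ LinearMap.ker (evalPoints pts) := by
  rintro _ ⟨r, -, rfl⟩
  ext s
  simp [hq s]

theorem exists_mem_bidegreeLE_one_one_eval_eq {u v : Fin 2 → K} (huv : u ≠ v) :
    ∃ f ∈ bidegreeLE K 1 1, eval u f = 1 ∧ eval v f = 0 := by
  obtain ⟨i, hi⟩ := Function.ne_iff.1 huv
  refine ⟨C (u i - v i)⁻¹ * (X i - C (v i)), mem_bidegreeLE.2 ?_, ?_, by simp⟩
  · have (j : Fin 2) : degreeOf j (C (u i - v i)⁻¹ * (X i - C (v i))) ≤ 1 := by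
      refine (degreeOf_C_mul_le _ _ _).trans ((degreeOf_sub_le _ _ _).trans ?_)
      classical
      simp only [degreeOf_X, degreeOf_C]
      split_ifs <;> simp
    exact ⟨this 0, this 1⟩
  · simp [inv_mul_cancel₀ (sub_ne_zero.2 hi)]

theorem exists_mem_bidegreeLE_evalPoints_eq_single {n α β : ℕ} {pts : Fin n → Fin 2 → K}
    (hinj : Injective pts) (hα : n ≤ α + 1) (hβ : n ≤ β + 1) (s₀ : Fin n) :
    ∃ q ∈ bidegreeLE K α β, evalPoints pts q = Pi.single s₀ 1 := by
  classical
  choose f hf hf₀ hf₁ using fun t : {t // t ≠ s₀} =>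
    exists_mem_bidegreeLE_one_one_eval_eq (hinj.ne t.2.symm)
  have hcard : Fintype.card {t // t ≠ s₀} * 1 = n - 1 := by simp
  refine ⟨∏ t, f t, bidegreeLE_mono (α := n - 1) (β := n - 1) (by omega) (by omega)
    (hcard ▸ prod_mem_bidegreeLE fun t _ => hf t), ?_⟩
  ext s
  rcases eq_or_ne s s₀ with rfl | hs
  · simp [map_prod, hf₀]
  · simpa [map_prod, hs] using Finset.prod_eq_zero (Finset.mem_univ ⟨s, hs⟩) (hf₁ ⟨s, hs⟩)

theorem evalPoints_domRestrict_surjective {n α β : ℕ} {pts : Fin n → Fin 2 → K}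
    (hinj : Injective pts) (hα : n ≤ α + 1) (hβ : n ≤ β + 1) :
    Surjective ((evalPoints pts).domRestrict (bidegreeLE K α β)) := by
  choose q hq hqs using exists_mem_bidegreeLE_evalPoints_eq_single hinj hα hβ
  intro v
  refine ⟨∑ s, v s • ⟨q s, hq s⟩, ?_⟩
  ext s
  simp [hqs, Finset.sum_apply, Pi.single_apply]

theorem finrank_bidegreeLE_inf_ker_evalPoints_add {n α β : ℕ} {pts : Fin n → Fin 2 → K}
    (hinj : Injective pts) (hα : n ≤ α + 1) (hβ : n ≤ β + 1) :
    finrank K ↥(bidegreeLE K α β ⊓ LinearMap.ker (evalPoints pts)) + n = (α + 1) * (β + 1) := by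
  set f := (evalPoints pts).domRestrict (bidegreeLE K α β)
  have hker : (LinearMap.ker f).map (bidegreeLE K α β).subtype =
      bidegreeLE K α β ⊓ LinearMap.ker (evalPoints pts) := by
    rw [LinearMap.ker_domRestrict, Submodule.map_comap_subtype]
  have hrank := f.finrank_range_add_finrank_ker
  rw [LinearMap.range_eq_top.2 (evalPoints_domRestrict_surjective hinj hα hβ), finrank_top,
    finrank_fin_fun, finrank_bidegreeLE] at hrank
  rw [← hker, Submodule.finrank_map_subtype_eq]
  omega

/-- Bézout bound for bidegrees. With `B(α, β) = bidegreeLE K α β`, the subspaces `p • B(c+n, d+n)`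
and `P • B(a+n, b+n)` meet inside `pP • B(n, n)` because `p` is prime and `p ∤ P`; their sum lies
in the subspace of `B(a+c+n, b+d+n)` vanishing at the `n` points, of codimension `n`, and
counting dimensions leaves `n ≤ ad + bc`. -/
theorem card_le_degreeOf_mul_add_of_not_dvd {p P : MvPolynomial (Fin 2) K} (hp : Irreducible p)
    (hpP : ¬p ∣ P) {n : ℕ} {pts : Fin n → Fin 2 → K} (hinj : Injective pts)
    (hp₀ : ∀ s, eval (pts s) p = 0) (hP₀ : ∀ s, eval (pts s) P = 0) :
    n ≤ degreeOf 0 p * degreeOf 1 P + degreeOf 1 p * degreeOf 0 P := by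
  have hp0 : p ≠ 0 := hp.ne_zero
  have hP0 : P ≠ 0 := by rintro rfl; exact hpP (dvd_zero p)
  set a := degreeOf 0 p
  set b := degreeOf 1 p
  set c := degreeOf 0 P
  set d := degreeOf 1 P
  set U₁ := (bidegreeLE K (c + n) (d + n)).map (LinearMap.mulLeft K p)
  set U₂ := (bidegreeLE K (a + n) (b + n)).map (LinearMap.mulLeft K P)
  have h₁ : finrank K U₁ = (c + n + 1) * (d + n + 1) := by
    rw [finrank_map_mulLeft hp0, finrank_bidegreeLE]
  have h₂ : finrank K U₂ = (a + n + 1) * (b + n + 1) := by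
    rw [finrank_map_mulLeft hP0, finrank_bidegreeLE]
  have hinf : finrank K ↥(U₁ ⊓ U₂) ≤ (n + 1) * (n + 1) := by
    refine (Submodule.finrank_mono (map_mulLeft_inf_map_mulLeft_le hp.prime hpP _ n n)).trans_eq ?_
    rw [finrank_map_mulLeft (mul_ne_zero hp0 hP0), finrank_bidegreeLE]
  have hsup : finrank K ↥(U₁ ⊔ U₂) + n ≤ (a + c + n + 1) * (b + d + n + 1) := by
    rw [← finrank_bidegreeLE_inf_ker_evalPoints_add hinj (by omega) (by omega)]
    gcongr
    refine Submodule.finrank_mono (sup_le (le_inf ?_ ?_) (le_inf ?_ ?_))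
    · exact (map_mulLeft_bidegreeLE_le (mem_bidegreeLE_degreeOf _) _ _).trans
        (bidegreeLE_mono (by omega) (by omega))
    · exact map_mulLeft_le_ker_evalPoints hp₀ _
    · exact (map_mulLeft_bidegreeLE_le (mem_bidegreeLE_degreeOf _) _ _).trans
        (bidegreeLE_mono (by omega) (by omega))
    · exact map_mulLeft_le_ker_evalPoints hP₀ _
  have hsum := Submodule.finrank_sup_add_finrank_inf_eq U₁ U₂
  have key : (a + c + n + 1) * (b + d + n + 1) + (n + 1) * (n + 1) =
      (c + n + 1) * (d + n + 1) + (a + n + 1) * (b + n + 1) + (a * d + b * c) := by ring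
  omega

theorem dvd_of_degreeOf_mul_add_lt {p P : MvPolynomial (Fin 2) K} (hp : Irreducible p) {n : ℕ}
    {pts : Fin n → Fin 2 → K} (hinj : Injective pts)
    (hp₀ : ∀ s, eval (pts s) p = 0) (hP₀ : ∀ s, eval (pts s) P = 0)
    (hn : degreeOf 0 p * degreeOf 1 P + degreeOf 1 p * degreeOf 0 P < n) : p ∣ P := by
  by_contra hpP
  exact hn.not_ge (card_le_degreeOf_mul_add_of_not_dvd hp hpP hinj hp₀ hP₀)

end MvPolynomial

end

noncomputable section

open MvPolynomial Function Complex

def toTorus (y : ℝ × ℝ) : Fin 2 → ℂ :=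
  ![exp (2 * π * I * y.1), exp (2 * π * I * y.2)]

theorem exp_two_pi_I_mul_injOn : Set.InjOn (fun t : ℝ => exp (2 * π * I * t)) (Set.Ico 0 1) := by
  intro u hu v hv huv
  have h : Circle.exp (2 * π * u) = Circle.exp (2 * π * v) := by
    ext
    simpa [Circle.coe_exp, mul_comm, mul_left_comm] using huv
  have := Circle.exp_injOn_Ico (a := 0) (b := 2 * π) (by simp)
    ⟨by have := hu.1; positivity, by nlinarith [hu.2, Real.pi_pos]⟩
    ⟨by have := hv.1; positivity, by nlinarith [hv.2, Real.pi_pos]⟩ h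
  nlinarith [Real.pi_pos]

theorem toTorus_injOn : Set.InjOn toTorus (Set.Ico 0 1 ×ˢ Set.Ico 0 1) := by
  rintro ⟨u₁, u₂⟩ ⟨hu₁, hu₂⟩ ⟨v₁, v₂⟩ ⟨hv₁, hv₂⟩ h
  exact Prod.ext (exp_two_pi_I_mul_injOn hu₁ hv₁ (congrFun h 0))
    (exp_two_pi_I_mul_injOn hu₂ hv₂ (congrFun h 1))

theorem trigExp_eq_toTorus {k : ℤ × ℤ} (h₁ : 0 ≤ k.1) (h₂ : 0 ≤ k.2) (y : ℝ × ℝ) :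
    trigExp k y = toTorus y 0 ^ k.1.toNat * toTorus y 1 ^ k.2.toNat := by
  obtain ⟨i, j⟩ := k
  lift i to ℕ using h₁
  lift j to ℕ using h₂
  simp only [trigExp, toTorus, Matrix.cons_val_zero, Matrix.cons_val_one, Int.toNat_natCast,
    ← exp_nat_mul, ← exp_add]
  push_cast
  ring_nf

theorem nonneg_of_mem_rectZ {a b : ℕ} {k : ℤ × ℤ} (hk : k ∈ rectZ a b) : 0 ≤ k.1 ∧ 0 ≤ k.2 := by
  simp only [rectZ, Finset.mem_product, Finset.mem_Ico] at hk
  exact ⟨hk.1.1, hk.2.1⟩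

theorem eval_toTorus_assocPolyZ {Λ : Finset (ℤ × ℤ)} (hΛ : ∀ k ∈ Λ, 0 ≤ k.1 ∧ 0 ≤ k.2)
    (c : ℤ × ℤ → ℂ) (y : ℝ × ℝ) : eval (toTorus y) (assocPolyZ Λ c) = trigPolyZ Λ c y := by
  simp only [assocPolyZ, trigPolyZ, map_sum, map_mul, map_pow, eval_C, eval_X, mul_assoc]
  exact Finset.sum_congr rfl fun k hk => by rw [trigExp_eq_toTorus (hΛ k hk).1 (hΛ k hk).2]

theorem assocPolyZ_rectZ_mem_bidegreeLE (a b : ℕ) (c : ℤ × ℤ → ℂ) :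
    assocPolyZ (rectZ a b) c ∈ bidegreeLE ℂ a b := by
  refine Submodule.sum_mem _ fun k hk => ?_
  simp only [rectZ, Finset.mem_product, Finset.mem_Ico] at hk
  have hmon : (C (c k) * X 0 ^ k.1.toNat * X 1 ^ k.2.toNat : MvPolynomial (Fin 2) ℂ) =
      monomial (Finsupp.single 0 k.1.toNat + Finsupp.single 1 k.2.toNat) (c k) := by
    simp [X_pow_eq_monomial, C_mul_monomial, monomial_mul]
  rw [hmon, bidegreeLE, monomial_mem_restrictSupport]
  left
  simp
  omega

theorem assocPolyZ_rectZ_dvd_of_common_zeros {a b l₁ l₂ n : ℕ} {d e : ℤ × ℤ → ℂ}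
    (hirr : Irreducible (assocPolyZ (rectZ a b) d)) {pts : Fin n → ℝ × ℝ} (hinj : Injective pts)
    (hdom : ∀ s, pts s ∈ Set.Ico 0 1 ×ˢ Set.Ico 0 1)
    (hd : ∀ s, trigPolyZ (rectZ a b) d (pts s) = 0)
    (he : ∀ s, trigPolyZ (rectZ l₁ l₂) e (pts s) = 0)
    (hn : a * l₂ + b * l₁ < n) : assocPolyZ (rectZ a b) d ∣ assocPolyZ (rectZ l₁ l₂) e := by
  obtain ⟨hp₀, hp₁⟩ := mem_bidegreeLE.1 (assocPolyZ_rectZ_mem_bidegreeLE a b d)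
  obtain ⟨hP₀, hP₁⟩ := mem_bidegreeLE.1 (assocPolyZ_rectZ_mem_bidegreeLE l₁ l₂ e)
  refine dvd_of_degreeOf_mul_add_lt hirr (pts := toTorus ∘ pts)
    (fun s t hst => hinj (toTorus_injOn (hdom s) (hdom t) hst))
    (fun s => (eval_toTorus_assocPolyZ (fun _ => nonneg_of_mem_rectZ) _ _).trans (hd s))
    (fun s => (eval_toTorus_assocPolyZ (fun _ => nonneg_of_mem_rectZ) _ _).trans (he s)) ?_
  calc _ ≤ a * l₂ + b * l₁ := add_le_add (Nat.mul_le_mul hp₀ hP₁) (Nat.mul_le_mul hp₁ hP₀)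
    _ < n := hn

theorem trigPolyZ_eq_zero_of_assocPolyZ_dvd {Λ Λ' : Finset (ℤ × ℤ)}
    (hΛ : ∀ k ∈ Λ, 0 ≤ k.1 ∧ 0 ≤ k.2) (hΛ' : ∀ k ∈ Λ', 0 ≤ k.1 ∧ 0 ≤ k.2) {d e : ℤ × ℤ → ℂ}
    (hde : assocPolyZ Λ d ∣ assocPolyZ Λ' e) {y : ℝ × ℝ} (hy : trigPolyZ Λ d y = 0) :
    trigPolyZ Λ' e y = 0 := by
  obtain ⟨q, hq⟩ := hde
  rw [← eval_toTorus_assocPolyZ hΛ', hq, map_mul, eval_toTorus_assocPolyZ hΛ, hy, zero_mul]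

theorem trigPolyZ_eq_of_subset {Λ Λ' : Finset (ℤ × ℤ)} (hΛ : Λ ⊆ Λ') {c : ℤ × ℤ → ℂ}
    (hc : ∀ k, c k ≠ 0 → k ∈ Λ) (y : ℝ × ℝ) : trigPolyZ Λ' c y = trigPolyZ Λ c y :=
  (Finset.sum_subset hΛ fun k _ hk => by rw [not_imp_comm.1 (hc k) hk, zero_mul]).symm

theorem trigPolyZ_sum_mul {ι : Type*} (s : Finset ι) (Λ : Finset (ℤ × ℤ)) (a : ι → ℂ)
    (E : ι → ℤ × ℤ → ℂ) (y : ℝ × ℝ) :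
    trigPolyZ Λ (fun k => ∑ i ∈ s, a i * E i k) y = ∑ i ∈ s, a i * trigPolyZ Λ (E i) y := by
  simp only [trigPolyZ, Finset.sum_mul, Finset.mul_sum, mul_assoc]
  exact Finset.sum_comm

theorem rectZ_mono {a a' b b' : ℕ} (ha : a ≤ a') (hb : b ≤ b') : rectZ a b ⊆ rectZ a' b' :=
  Finset.product_subset_product (Finset.Ico_subset_Ico_right (by exact_mod_cast ha))
    (Finset.Ico_subset_Ico_right (by exact_mod_cast hb))

end

theorem sos_zero_set_general (J : ℕ) (k1 k2 : Fin J → ℕ)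
    (K₁ K₂ l₁ l₂ : ℕ) (hl₁ : K₁ ≤ l₁) (hl₂ : K₂ ≤ l₂)
    (d : Fin J → ℤ × ℤ → ℂ)
    (hirr : ∀ j, Irreducible (assocPolyZ (rectZ (k1 j) (k2 j)) (d j)))
    (c : ℤ × ℤ → ℂ) (hcsupp : ∀ k, c k ≠ 0 → k ∈ rectZ K₁ K₂)
    (hfact : ∀ x : ℝ × ℝ,
      trigPolyZ (rectZ K₁ K₂) c x = ∏ j, trigPolyZ (rectZ (k1 j) (k2 j)) (d j) x)
    (N : Fin J → ℕ) (x : (j : Fin J) → Fin (N j) → ℝ × ℝ)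
    (hinj : ∀ j, Function.Injective (x j))
    (hdom : ∀ j i, (x j i).1 ∈ Set.Ico (0 : ℝ) 1 ∧ (x j i).2 ∈ Set.Ico (0 : ℝ) 1)
    (hsamp : ∀ j i, trigPolyZ (rectZ (k1 j) (k2 j)) (d j) (x j i) = 0)
    (hN : ∀ j, (l₁ + l₂) * (k1 j + k2 j) < N j)
    (Q : ℕ) (E : Fin Q → ℤ × ℤ → ℂ)
    (hEzero : ∀ i j s, trigPolyZ (rectZ l₁ l₂) (E i) (x j s) = 0)
    (hEspan : ∀ v : ℤ × ℤ → ℂ, (∀ k, v k ≠ 0 → k ∈ rectZ l₁ l₂) →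
      (∀ j s, trigPolyZ (rectZ l₁ l₂) v (x j s) = 0) →
      ∃ a : Fin Q → ℂ, ∀ k, v k = ∑ i, a i * E i k) :
    ∀ y : ℝ × ℝ, y.1 ∈ Set.Ico (0 : ℝ) 1 → y.2 ∈ Set.Ico (0 : ℝ) 1 →
      ((∑ i, ‖trigPolyZ (rectZ l₁ l₂) (E i) y‖ ^ 2 = 0) ↔
        trigPolyZ (rectZ K₁ K₂) c y = 0) := by
  intro y _ _
  have hsub := rectZ_mono hl₁ hl₂
  simp only [Finset.sum_eq_zero_iff_of_nonneg (fun _ _ => sq_nonneg _), Finset.mem_univ,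
    forall_const, sq_eq_zero_iff, norm_eq_zero]
  constructor
  · intro hμ
    have hψ (j : Fin J) (s : Fin (N j)) : trigPolyZ (rectZ l₁ l₂) c (x j s) = 0 := by
      rw [trigPolyZ_eq_of_subset hsub hcsupp, hfact]
      exact Finset.prod_eq_zero (Finset.mem_univ j) (hsamp j s)
    obtain ⟨a, ha⟩ := hEspan c (fun k hk => hsub (hcsupp k hk)) hψ
    rw [← trigPolyZ_eq_of_subset hsub hcsupp, funext ha, trigPolyZ_sum_mul]
    simp [hμ]
  · intro hψ i
    obtain ⟨j, -, hj⟩ := Finset.prod_eq_zero_iff.1 (hfact y ▸ hψ)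
    have hdvd := assocPolyZ_rectZ_dvd_of_common_zeros (hirr j) (hinj j) (hdom j) (hsamp j)
      (hEzero i j) (by nlinarith [hN j])
    exact trigPolyZ_eq_zero_of_assocPolyZ_dvd (fun _ => nonneg_of_mem_rectZ)
      (fun _ => nonneg_of_mem_rectZ) hdvd hj

/-- Sum-of-squares recovery of the curve: under the over-estimated-support sampling
conditions, if `μ₁,…,μ_Q` is a basis of the space of trigonometric polynomials with
support in `Γ` vanishing at all sample points, then the sum-of-squares function
`γ(x) = ∑ᵢ |μᵢ(x)|²` vanishes at `x ∈ [0,1)²` iff `ψ(x) = 0`. -/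
theorem sos_zero_set (J : ℕ) (k1 k2 : Fin J → ℕ)
    (K₁ K₂ l₁ l₂ : ℕ) (hl₁ : K₁ ≤ l₁) (hl₂ : K₂ ≤ l₂)
    (d : Fin J → ℤ × ℤ → ℂ)
    (hirr : ∀ j, Irreducible (assocPolyZ (rectZ (k1 j) (k2 j)) (d j)))
    (c : ℤ × ℤ → ℂ) (hcsupp : ∀ k, c k ≠ 0 → k ∈ rectZ K₁ K₂) (hc : c ≠ 0)
    (hfact : ∀ x : ℝ × ℝ,
      trigPolyZ (rectZ K₁ K₂) c x = ∏ j, trigPolyZ (rectZ (k1 j) (k2 j)) (d j) x)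
    (N : Fin J → ℕ) (x : (j : Fin J) → Fin (N j) → ℝ × ℝ)
    (hinj : ∀ j, Function.Injective (x j))
    (hdom : ∀ j i, (x j i).1 ∈ Set.Ico (0 : ℝ) 1 ∧ (x j i).2 ∈ Set.Ico (0 : ℝ) 1)
    (hsamp : ∀ j i, trigPolyZ (rectZ (k1 j) (k2 j)) (d j) (x j i) = 0)
    (hN : ∀ j, (l₁ + l₂) * (k1 j + k2 j) < N j)
    (Q : ℕ) (E : Fin Q → ℤ × ℤ → ℂ)
    (hEsupp : ∀ i k, E i k ≠ 0 → k ∈ rectZ l₁ l₂)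
    (hEzero : ∀ i j s, trigPolyZ (rectZ l₁ l₂) (E i) (x j s) = 0)
    (hEindep : LinearIndependent ℂ E)
    (hEspan : ∀ v : ℤ × ℤ → ℂ, (∀ k, v k ≠ 0 → k ∈ rectZ l₁ l₂) →
      (∀ j s, trigPolyZ (rectZ l₁ l₂) v (x j s) = 0) →
      ∃ a : Fin Q → ℂ, ∀ k, v k = ∑ i, a i * E i k) :
    ∀ y : ℝ × ℝ, y.1 ∈ Set.Ico (0 : ℝ) 1 → y.2 ∈ Set.Ico (0 : ℝ) 1 →
      ((∑ i, ‖trigPolyZ (rectZ l₁ l₂) (E i) y‖ ^ 2 = 0) ↔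
        trigPolyZ (rectZ K₁ K₂) c y = 0) :=
  sos_zero_set_general J k1 k2 K₁ K₂ l₁ l₂ hl₁ hl₂ d hirr c hcsupp hfact N x hinj hdom hsamp hN Q E
    hEzero hEspan
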